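/- For every λ ∈ Q', the stabilizer W_λ^∘ = {w ∈ W : w∘λ = λ} of λ under the circle action is generated by reflections in W (i.e. by W-conjugates of simple reflections). -/

import Mathlib

open scoped Classical

noncomputable section

/-- An axiomatization of the root datum of a Kac--Moody algebra `𝔤` associated to an
`n × n` generalized Cartan matrix, realized on the lattice `V` of integral weights
(the subgroup of `𝔥*` spanned by the weight lattice `P`, the root lattice `Q` and a
Weyl vector).  `alpha i` are the simple roots, `pair i v = v(α_i^∨)` is the pairing
with the simple coroots, and `mult β = dim 𝔤_β` is the root multiplicity function.  -/
structure KacMoody (n : ℕ) (V : Type) [AddCommGroup V] where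
  /-- the simple roots `α_i` -/
  alpha : Fin n → V
  /-- the pairing with the simple coroots, `pair i v = v(α_i^∨)` -/
  pair : Fin n → V →+ ℤ
  /-- the diagonal entries of the generalized Cartan matrix `a_{ij} = pair i (alpha j)` are `2` -/
  pair_self : ∀ i, pair i (alpha i) = 2
  /-- the off-diagonal entries of the generalized Cartan matrix are nonpositive -/
  pair_offdiag : ∀ i j, i ≠ j → pair i (alpha j) ≤ 0
  /-- `a_{ij} = 0 → a_{ji} = 0` -/
  pair_zero_iff : ∀ i j, pair i (alpha j) = 0 → pair j (alpha i) = 0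
  /-- the simple roots are linearly independent -/
  indep : ∀ c : Fin n → ℤ, ∑ i, c i • alpha i = 0 → ∀ i, c i = 0
  /-- root multiplicities: `mult β = dim 𝔤_β`; `β ≠ 0` is a root iff `mult β ≠ 0` -/
  mult : V → ℕ
  /-- simple roots are roots of multiplicity one -/
  mult_simple : ∀ i, mult (alpha i) = 1
  /-- every root is positive or negative -/
  root_pm : ∀ β : V, mult β ≠ 0 → β ≠ 0 →
    (∃ c : Fin n → ℕ, β = ∑ i, c i • alpha i) ∨ (∃ c : Fin n → ℕ, β = -∑ i, c i • alpha i)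
  /-- multiplicities are invariant under the simple reflections (hence under the Weyl group) -/
  mult_reflect : ∀ (i) (v : V), mult (v - pair i v • alpha i) = mult v
  /-- a given `μ` admits only finitely many partitions into positive roots (counted
  with multiplicity); this is automatic for genuine Kac--Moody root systems -/
  part_finite : ∀ μ : V,
    {p : Finset (V × ℕ) |
      (∀ x ∈ p, (mult x.1 ≠ 0 ∧ x.1 ≠ 0 ∧ x.1 ∈ {v : V | ∃ c : Fin n → ℕ,
          v = ∑ i, c i • alpha i}) ∧ 1 ≤ x.2 ∧ x.2 ≤ mult x.1) ∧
        ∑ x ∈ p, x.1 = μ}.Finite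

/-- the (multiplicative) group structure on `AddAut A` of the older Mathlib, where
`AddAut A` was a multiplicative group (`e₁ * e₂ = e₂.trans e₁`) -/
instance addAutGroupOld (A : Type*) [Add A] : Group (AddAut A) where
  mul g h := AddEquiv.trans h g
  one := AddEquiv.refl _
  inv := AddEquiv.symm
  mul_assoc _ _ _ := rfl
  one_mul _ := rfl
  mul_one _ := rfl
  inv_mul_cancel := AddEquiv.self_trans_symm

namespace KacMoody

variable {n : ℕ} {V : Type} [AddCommGroup V] (K : KacMoody n V)

/-- the positive root cone `Q⁺` (the `ℕ`-span of the simple roots) -/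
def QP : Set V := {v | ∃ c : Fin n → ℕ, v = ∑ i, c i • K.alpha i}

/-- `β` is a positive root of `𝔤` -/
def IsPosRoot (β : V) : Prop := K.mult β ≠ 0 ∧ β ≠ 0 ∧ β ∈ K.QP

/-- the underlying function of the simple reflection `s_i` -/
def sAux (i : Fin n) : V → V := fun v => v - K.pair i v • K.alpha i

lemma sAux_add (i : Fin n) (a b : V) : K.sAux i (a + b) = K.sAux i a + K.sAux i b := by
  simp only [sAux, map_add, add_smul]; abel

lemma sAux_invol (i : Fin n) : Function.Involutive (K.sAux i) := by
  intro v
  simp only [sAux, map_sub, map_zsmul, K.pair_self i, smul_eq_mul]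
  have h2 : K.pair i v - K.pair i v * 2 = -(K.pair i v) := by ring
  rw [h2, neg_smul, sub_neg_eq_add]
  abel

/-- the simple reflection `s_i`, as an automorphism of the weight lattice -/
def s (i : Fin n) : AddAut V :=
  { toFun := K.sAux i
    invFun := K.sAux i
    left_inv := K.sAux_invol i
    right_inv := K.sAux_invol i
    map_add' := K.sAux_add i }

/-- the Weyl group `W` of `𝔤`, realized as the subgroup of `Aut(𝔥*)` generated by the
simple reflections -/
def Wgrp : Subgroup (AddAut V) := Subgroup.closure (Set.range K.s)

/-- the length `ℓ(w)` of an element of the Weyl group: the minimal length of an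
expression of `w` as a product of simple reflections -/
def len (w : AddAut V) : ℕ :=
  sInf {k | ∃ l : List (Fin n), l.length = k ∧ (l.map K.s).prod = w}

/-- the set `P⁺` of dominant integral weights -/
def Pplus : Set V := {v | ∀ i, 0 ≤ K.pair i v}

/-- `β` is a real root: it is `W`-conjugate to a simple root -/
def IsRealRoot (β : V) : Prop := ∃ w ∈ K.Wgrp, ∃ i, w (K.alpha i) = β

/-- `β` is an imaginary root: a root that is not real -/
def IsImRoot (β : V) : Prop := K.mult β ≠ 0 ∧ β ≠ 0 ∧ ¬K.IsRealRoot β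

/-- the cone `Q⁻_im` generated by the negative imaginary roots -/
def coneIm : Set V :=
  (AddSubmonoid.closure {v : V | K.IsImRoot v ∧ -v ∈ K.QP} : AddSubmonoid V)

/-- the element of `Q⁺` with coordinates `c` in the basis of simple roots -/
def toV (c : Fin n →₀ ℕ) : V := ∑ i, c i • K.alpha i

/-- the coordinates of an element of `Q⁺` in the basis of simple roots -/
def coordOf (v : V) : Fin n →₀ ℕ :=
  if h : ∃ c : Fin n →₀ ℕ, K.toV c = v then h.choose else 0

/-- `p` is an admissible partition of `μ`: a finite subset of
`𝒫 = {(α, i) : α ∈ Φ⁺, 1 ≤ i ≤ mult α}` whose parts sum to `μ` -/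
def IsPart (μ : V) (p : Finset (V × ℕ)) : Prop :=
  (∀ x ∈ p, (K.mult x.1 ≠ 0 ∧ x.1 ≠ 0 ∧ x.1 ∈ K.QP) ∧ 1 ≤ x.2 ∧ x.2 ≤ K.mult x.1) ∧
    ∑ x ∈ p, x.1 = μ

lemma isPart_finite (μ : V) : {p : Finset (V × ℕ) | K.IsPart μ p}.Finite := K.part_finite μ

/-- the finite set `𝒫(μ)` of admissible partitions of `μ` -/
def partsFinset (μ : V) : Finset (Finset (V × ℕ)) := (K.isPart_finite μ).toFinset

/-- the Kim--Lee function `H(μ; q) = Σ_{𝔭 ∈ 𝒫(μ)} (-q)^{|𝔭|}`, i.e. the coefficient of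
`e^{-μ}` in `Π_{α ∈ Φ⁺} (1 - q e^{-α})^{mult α}` -/
def H (μ : V) : Polynomial ℤ := ∑ p ∈ K.partsFinset μ, (-Polynomial.X) ^ p.card

/-- the Weyl denominator `Π_{α ∈ Φ⁺} (1 - e^{-α})^{mult α}`, expanded as a formal sum;
the coefficient at `c` is the coefficient of `e^{-toV c}` -/
def den : MvPowerSeries (Fin n) ℤ :=
  fun c => ∑ p ∈ K.partsFinset (K.toV c), (-1 : ℤ) ^ p.card

/-- `ξ^λ = Σ_{w ∈ W} (-1)^{ℓ(w)} e^{w∘λ}` as a formal sum supported on `Q⁻`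
(for `λ ∈ Q'`); the coefficient at `c` is the coefficient of `e^{-toV c}` -/
def xiMv (ρ lam : V) : MvPowerSeries (Fin n) ℤ :=
  fun c => ∑ᶠ w ∈ {w : AddAut V | w ∈ K.Wgrp ∧ w (lam + ρ) - ρ = -K.toV c},
    (-1 : ℤ) ^ K.len w

/-- the Poincaré series `χ(q) = Σ_{w ∈ W} q^{ℓ(w)}` of the Weyl group -/
def chiPS : PowerSeries ℤ :=
  PowerSeries.mk fun k => (Nat.card {w : AddAut V | w ∈ K.Wgrp ∧ K.len w = k} : ℤ)

/-- the inversion set `Φ(w⁻¹) = {α ∈ Φ⁺ : wα < 0}` -/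
def Inversions (w : AddAut V) : Set V := {β | K.IsPosRoot β ∧ -(w β) ∈ K.QP}

/-- the number of inversions of `w`, counted with multiplicity -/
def NInv (w : AddAut V) : ℕ := ∑ᶠ β ∈ K.Inversions w, K.mult β

/-- a finite subset of `𝒫 = {(α, i) : α ∈ Φ⁺, 1 ≤ i ≤ mult α}` -/
def IsChoice (p : Finset (V × ℕ)) : Prop :=
  ∀ x ∈ p, K.IsPosRoot x.1 ∧ 1 ≤ x.2 ∧ x.2 ≤ K.mult x.1

/-- the formal sum expansion of `Δ^w`, the image of
`Δ = Π_{α ∈ Φ⁺} ((1 - q e^{-α})/(1 - e^{-α}))^{mult α}` under `w ∈ W`: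
`Δ^w = Π_{α ∈ Φ(w⁻¹)} ((q - e^{-α})/(1 - e^{-α})) ·
Π_{α ∈ Φ⁺ ∖ Φ(w⁻¹)} ((1 - q e^{-α})/(1 - e^{-α}))^{mult α}`, where numerators are
expanded by choosing a finite subset `pf.1` of `𝒫` and denominators by choosing a
finitely supported multiset `pf.2` on `𝒫`. -/
def deltaW (w : AddAut V) : MvPowerSeries (Fin n) (PowerSeries ℤ) :=
  fun c =>
    ∑ᶠ pf ∈ {pf : Finset (V × ℕ) × ((V × ℕ) →₀ ℕ) |
        K.IsChoice pf.1 ∧ (∀ x ∈ pf.2.support, K.IsPosRoot x.1 ∧ 1 ≤ x.2 ∧ x.2 ≤ K.mult x.1) ∧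
        (∑ x ∈ pf.1, x.1) + (pf.2.sum fun x k => k • x.1) = K.toV c},
      ((-1 : ℤ) ^ pf.1.card) •
        (PowerSeries.X : PowerSeries ℤ) ^
          (K.NInv w + (pf.1.filter fun x => x.1 ∉ K.Inversions w).card
            - (pf.1.filter fun x => x.1 ∈ K.Inversions w).card)

/-- the formal sum `ℳ(q) = Σ_{w ∈ W} Δ^w`, a formal sum supported on `Q⁻` with
coefficients in `ℤ[[q]]`; the coefficient at `c` is the coefficient of `e^{-toV c}` -/
def Mcal : MvPowerSeries (Fin n) (PowerSeries ℤ) :=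
  fun c => PowerSeries.mk fun m =>
    ∑ᶠ w ∈ {w : AddAut V | w ∈ K.Wgrp},
      PowerSeries.coeff m (MvPowerSeries.coeff c (K.deltaW w))

/-- `Q' = ⋂_{w ∈ W} w ∘ Q⁻`, where `∘` is the circle (dot) action `w ∘ λ = w(λ+ρ) - ρ` -/
def Qprime (ρ : V) : Set V := {v | ∀ w ∈ K.Wgrp, -(w (v + ρ) - ρ) ∈ K.QP}

/-- `ξ^λ = Σ_{w ∈ W} (-1)^{ℓ(w)} e^{w∘λ}` as a formal sum on all of `𝔥*`:
`xiFun ρ lam v` is the coefficient of `e^v` -/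
def xiFun (ρ lam : V) : V → ℤ :=
  fun v => ∑ᶠ w ∈ {w : AddAut V | w ∈ K.Wgrp ∧ w (lam + ρ) - ρ = v}, (-1 : ℤ) ^ K.len w

/-- the numerator `Σ_{w ∈ W} (-1)^{ℓ(w)} e^{w(λ+ρ)}` of `π^λ`, as a formal sum:
`numFun ρ lam v` is the coefficient of `e^v` -/
def numFun (ρ lam : V) : V → ℤ :=
  fun v => ∑ᶠ w ∈ {w : AddAut V | w ∈ K.Wgrp ∧ w (lam + ρ) = v}, (-1 : ℤ) ^ K.len w

/-- the map `φ_i : 𝒫(-λ) → 𝒫(-s_i ∘ λ)` on admissible partitions -/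
def phi (i : Fin n) (p : Finset (V × ℕ)) : Finset (V × ℕ) :=
  if ∃ x ∈ p, x.1 = K.alpha i then
    (p.filter fun x => x.1 ≠ K.alpha i).image fun x => (K.s i x.1, x.2)
  else insert (K.alpha i, 1) (p.image fun x => (K.s i x.1, x.2))

/-- `m(𝔭, w) = |𝔭| - 2 ⬝ #{(β, j) ∈ 𝔭 : wβ < 0}` -/
def mpw (w : AddAut V) (p : Finset (V × ℕ)) : ℤ :=
  (p.card : ℤ) - 2 * (p.filter fun x => -(w x.1) ∈ K.QP ∧ w x.1 ≠ 0).card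

/-- `|wβ|`: the positive root among `± wβ` -/
def wabs (w : AddAut V) (β : V) : V := if -(w β) ∈ K.QP then -(w β) else w β

/-- `Σ_{α ∈ Φ(w⁻¹)} mult α • (-wα)`, the forced monomial appearing when `w` acts on the
Weyl denominator -/
def invWt (w : AddAut V) : V := ∑ᶠ β ∈ K.Inversions w, K.mult β • (-(w β))

/-- the series part of the expansion of `w(Π_{α ∈ Φ⁺} (1 - e^{-α})^{mult α})`:
by the defining action `w(1 - e^{-α}) = 1 - e^{-wα}` if `wα > 0` and
`w(1 - e^{-α}) = (-e^{-wα})(1 - e^{wα})` if `wα < 0`, one has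
`w(Π_{α ∈ Φ⁺} (1 - e^{-α})^{mult α}) = (-1)^{NInv w} e^{invWt w} · wDen w`, where
`wDen w = Π_{α ∈ Φ⁺, (α,i) ∈ 𝒫} (1 - e^{-|wα|})`; the coefficient at `c` is the
coefficient of `e^{-toV c}` -/
def wDen (w : AddAut V) : MvPowerSeries (Fin n) ℤ :=
  fun c => ∑ᶠ p ∈ {p : Finset (V × ℕ) | K.IsChoice p ∧
      (∑ x ∈ p, K.wabs w x.1) = K.toV c},
    (-1 : ℤ) ^ p.card

/-- for a word `l = (i_1, …, i_ℓ)`, the root `s_{i_1} ⋯ s_{i_{k-1}} (α_{i_k})` -/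
def prefixRoot (l : List (Fin n)) (k : Fin l.length) : V :=
  ((l.take k).map K.s).prod (K.alpha (l.get k))

end KacMoody

/-! With `μ = λ + ρ` the circle action becomes the linear one, `w ∘ λ = λ ↔ w μ = μ`, and
`λ ∈ Q'` says that the orbit `W μ` lies in `ρ - Q⁺`. A point `ν` of the orbit of least height
below `ρ` is dominant, so the stabilizer of `μ` is conjugate to that of `ν`, and the stabilizer
of a dominant weight is generated by the simple reflections fixing it. This last fact rests on
Tits' positivity `ℓ(w s_i) > ℓ(w) → w α_i > 0`, proved in the Coxeter group of the Cartan
matrix, which maps onto `W`, by reduction to rank-two computations. -/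

namespace addAutGroupOld

variable {A : Type*} [Add A]

@[simp] lemma mul_apply (e₁ e₂ : AddAut A) (m : A) : (e₁ * e₂) m = e₁ (e₂ m) := rfl

@[simp] lemma one_apply (m : A) : (1 : AddAut A) m = m := rfl

@[simp] lemma inv_apply_self (e : AddAut A) (m : A) : e⁻¹ (e m) = m := e.symm_apply_apply m

def stabilizer (a : A) : Subgroup (AddAut A) where
  carrier := {e | e a = a}
  mul_mem' {e₁ e₂} h₁ h₂ := by simp_all
  one_mem' := rfl
  inv_mem' {e} h := by
    change e⁻¹ a = a
    nth_rw 1 [← h]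
    exact inv_apply_self e a

@[simp] lemma mem_stabilizer_iff {a : A} {e : AddAut A} : e ∈ stabilizer a ↔ e a = a := Iff.rfl

end addAutGroupOld

namespace CoxeterSystem

variable {B W : Type*} [Group W] {M : CoxeterMatrix B} (cs : CoxeterSystem M W)

local prefix:100 "s" => cs.simple
local prefix:100 "π" => cs.wordProd
local prefix:100 "ℓ" => cs.length

theorem exists_eq_mul_simple_of_ne_one {w : W} (hw : w ≠ 1) :
    ∃ v i, w = v * s i ∧ ¬cs.IsRightDescent v i := by
  obtain ⟨i, hi⟩ := cs.exists_rightDescent_of_ne_one hw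
  exact ⟨w * s i, i, (cs.simple_mul_simple_cancel_right i).symm,
    cs.isRightDescent_iff_not_isRightDescent_mul.mp hi⟩

theorem exists_eq_mul_alternatingWord (i j : B) (w : W) (hw : ¬cs.IsRightDescent w i) :
    ∃ v q, w = v * π (alternatingWord i j q) ∧ ℓ v + q = ℓ w ∧
      ¬cs.IsRightDescent v i ∧ ¬cs.IsRightDescent v j := by
  induction hl : ℓ w using Nat.strong_induction_on generalizing w i j with
  | _ l ih =>
  by_cases hwj : cs.IsRightDescent w j
  · have hlen := cs.isRightDescent_iff.mp hwj
    obtain ⟨v, q, hv, hq, hvj, hvi⟩ := ih _ (by omega) j i (w * s j)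
      (cs.isRightDescent_iff_not_isRightDescent_mul.mp hwj) rfl
    refine ⟨v, q + 1, ?_, by omega, hvi, hvj⟩
    rw [alternatingWord_succ, wordProd_concat, ← mul_assoc, ← hv, simple_mul_simple_cancel_right]
  · exact ⟨w, 0, by simp [alternatingWord], by simp [hl], hw, hwj⟩

theorem lt_of_eq_mul_alternatingWord {i j : B} {w v : W} {q : ℕ} (hw : ¬cs.IsRightDescent w i)
    (hv : w = v * π (alternatingWord i j q)) (hq : ℓ v + q = ℓ w) :
    M i j = 0 ∨ q < M i j := by
  refine or_iff_not_imp_left.mpr fun hM => lt_of_le_of_ne ?_ fun hqM => hw ?_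
  · have hred : cs.IsReduced (alternatingWord i j q) := by
      have h1 := cs.length_wordProd_le (alternatingWord i j q)
      have h2 := hv ▸ cs.length_mul_le v (π (alternatingWord i j q))
      rw [length_alternatingWord] at h1
      unfold IsReduced; rw [length_alternatingWord]; omega
    by_contra h
    exact cs.not_isReduced_alternatingWord i j hM (by omega) hred
  · obtain ⟨p, rfl⟩ : ∃ p, q = p + 1 := ⟨q - 1, by omega⟩
    have hbraid : π (alternatingWord i j (p + 1)) = π (alternatingWord i j p) * s i := by
      rw [hqM, ← braidWord, cs.wordProd_braidWord_eq, braidWord, ← M.symmetric, ← hqM,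
        alternatingWord_succ, wordProd_concat]
    have h1 : w * s i = v * π (alternatingWord i j p) := by
      rw [hv, hbraid, mul_assoc, simple_mul_simple_cancel_right]
    have h2 := cs.length_mul_le v (π (alternatingWord i j p))
    have h3 := cs.length_wordProd_le (alternatingWord i j p)
    rw [length_alternatingWord] at h3
    rw [IsRightDescent, h1]
    omega

end CoxeterSystem

/-- The order of `s_i s_j` when `a_{ij} a_{ji} = a * b`, with `0` for infinite order. -/
def coxeterNumber (a b : ℤ) : ℕ :=
  if a * b = 0 then 2 else if a * b = 1 then 3 else if a * b = 2 then 4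
  else if a * b = 3 then 6 else 0

lemma coxeterNumber_comm (a b : ℤ) : coxeterNumber a b = coxeterNumber b a := by
  rw [coxeterNumber, coxeterNumber, mul_comm]

lemma coxeterNumber_ne_one (a b : ℤ) : coxeterNumber a b ≠ 1 := by
  unfold coxeterNumber; split_ifs <;> decide

lemma coxeterNumber_of_four_le {a b : ℤ} (h : 4 ≤ a * b) : coxeterNumber a b = 0 := by
  simp only [coxeterNumber]; split_ifs <;> omega

lemma rank2_cases {a b : ℤ} (ha : a ≤ 0) (hb : b ≤ 0) (hab : a = 0 ↔ b = 0) :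
    (a = 0 ∧ b = 0) ∨ (a = -1 ∧ b = -1) ∨ (a = -1 ∧ b = -2) ∨ (a = -2 ∧ b = -1) ∨
      (a = -1 ∧ b = -3) ∨ (a = -3 ∧ b = -1) ∨ 4 ≤ a * b := by
  by_cases h4 : 4 ≤ a * b
  · simp [h4]
  have ha' : -3 ≤ a := by
    by_contra
    have := mul_le_mul_of_nonpos_left (show b ≤ -1 by have := hab.not.mp (by omega); omega) ha
    linarith
  have hb' : -3 ≤ b := by
    by_contra
    have := mul_le_mul_of_nonpos_right (show a ≤ -1 by have := hab.not.mpr (by omega); omega) hb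
    linarith
  interval_cases a <;> interval_cases b <;> simp_all

/-- If `g` acts with coefficients `c` (see `KacMoody.ActsByRank2`), then `s_i s_j g` acts with
coefficients `rank2Step a b c`, where `a = a_{ij}`, `b = a_{ji}`. -/
def rank2Step (a b : ℤ) (c : ℤ × ℤ × ℤ × ℤ) : ℤ × ℤ × ℤ × ℤ :=
  (-c.1 - 1 - a * (-c.2.2.1 - b * c.1), -c.2.1 - a * (-c.2.2.2 - 1 - b * c.2.1),
    -c.2.2.1 - b * c.1, -c.2.2.2 - 1 - b * c.2.1)

lemma rank2Step_iterate_coxeterNumber {a b : ℤ} (ha : a ≤ 0) (hb : b ≤ 0) (hab : a = 0 ↔ b = 0) :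
    (rank2Step a b)^[coxeterNumber a b] 0 = 0 := by
  rcases rank2_cases ha hb hab with ⟨rfl, rfl⟩ | ⟨rfl, rfl⟩ | ⟨rfl, rfl⟩ | ⟨rfl, rfl⟩ |
    ⟨rfl, rfl⟩ | ⟨rfl, rfl⟩ | h4
  all_goals try decide
  rw [coxeterNumber_of_four_le h4, Function.iterate_zero_apply]

/-- `(altCoeff a b q).1 • α_i + (altCoeff a b q).2 • α_j` is the image of `α_i` under the
alternating product `⋯ s_i s_j` of length `q`, where `a = a_{ij}`, `b = a_{ji}`. -/
def altCoeff (a b : ℤ) : ℕ → ℤ × ℤ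
  | 0 => (1, 0)
  | q + 1 =>
    if Even q then ((altCoeff a b q).1, -b * (altCoeff a b q).1 - (altCoeff a b q).2)
    else (-a * (altCoeff a b q).2 - (altCoeff a b q).1, (altCoeff a b q).2)

lemma altCoeff_pos_of_four_le {a b : ℤ} (ha : a ≤ 0) (hb : b ≤ 0) (h4 : 4 ≤ a * b) (q : ℕ) :
    1 ≤ (altCoeff a b q).1 ∧ 0 ≤ (altCoeff a b q).2 ∧
      (Even q → 2 * (altCoeff a b q).2 ≤ -b * (altCoeff a b q).1) ∧
      (¬Even q → 2 * (altCoeff a b q).1 ≤ -a * (altCoeff a b q).2) := by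
  induction q with
  | zero => simp [altCoeff]; omega
  | succ q ih =>
    obtain ⟨hx, hy, heven, hodd⟩ := ih
    by_cases hq : Even q
    · have hq' : ¬Even (q + 1) := by simpa [Nat.even_add_one] using hq
      have := mul_le_mul_of_nonneg_left (heven hq) (by omega : (0 : ℤ) ≤ -a)
      rw [altCoeff, if_pos hq]
      refine ⟨hx, by nlinarith, fun h => absurd h hq', fun _ => ?_⟩
      nlinarith [mul_le_mul_of_nonneg_right h4 (by omega : (0 : ℤ) ≤ (altCoeff a b q).1)]
    · have hq' : Even (q + 1) := Nat.even_add_one.mpr hq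
      have := mul_le_mul_of_nonneg_left (hodd hq) (by omega : (0 : ℤ) ≤ -b)
      rw [altCoeff, if_neg hq]
      refine ⟨?_, hy, fun _ => ?_, fun h => absurd hq' h⟩ <;>
        nlinarith [mul_le_mul_of_nonneg_right h4 (by omega : (0 : ℤ) ≤ (altCoeff a b q).2)]

lemma altCoeff_nonneg {a b : ℤ} (ha : a ≤ 0) (hb : b ≤ 0) (hab : a = 0 ↔ b = 0) {q : ℕ}
    (hq : coxeterNumber a b = 0 ∨ q < coxeterNumber a b) :
    0 ≤ (altCoeff a b q).1 ∧ 0 ≤ (altCoeff a b q).2 := by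
  rcases rank2_cases ha hb hab with ⟨rfl, rfl⟩ | ⟨rfl, rfl⟩ | ⟨rfl, rfl⟩ | ⟨rfl, rfl⟩ |
    ⟨rfl, rfl⟩ | ⟨rfl, rfl⟩ | h4
  rotate_left 6
  · obtain ⟨h1, h2, -⟩ := altCoeff_pos_of_four_le ha hb h4 q
    exact ⟨by omega, h2⟩
  all_goals
    simp only [coxeterNumber] at hq
    norm_num at hq
    interval_cases q <;> decide

namespace KacMoody

variable {n : ℕ} {V : Type} [AddCommGroup V] (K : KacMoody n V)

@[simp] lemma s_apply (i : Fin n) (v : V) : K.s i v = v - K.pair i v • K.alpha i := rfl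

lemma pair_alpha_eq_zero_iff (i j : Fin n) :
    K.pair i (K.alpha j) = 0 ↔ K.pair j (K.alpha i) = 0 :=
  ⟨K.pair_zero_iff i j, K.pair_zero_iff j i⟩

lemma alpha_ne_zero (i : Fin n) : K.alpha i ≠ 0 :=
  (Fintype.linearIndependent_iff.mpr K.indep).ne_zero i

lemma eq_of_sum_zsmul_alpha_eq {c d : Fin n → ℤ} (h : ∑ i, c i • K.alpha i = ∑ i, d i • K.alpha i) :
    c = d := by
  funext i
  have := K.indep (c - d) (by simp [sub_smul, h]) i
  rwa [Pi.sub_apply, sub_eq_zero] at this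

lemma QP_eq_closure : K.QP = AddSubmonoid.closure (Set.range K.alpha) := by
  ext x
  rw [SetLike.mem_coe, AddSubmonoid.mem_closure_range_iff_of_fintype]
  rfl

lemma zero_mem_QP : (0 : V) ∈ K.QP := by
  rw [QP_eq_closure]; exact zero_mem _

lemma alpha_mem_QP (i : Fin n) : K.alpha i ∈ K.QP := by
  rw [QP_eq_closure]; exact AddSubmonoid.subset_closure ⟨i, rfl⟩

lemma add_mem_QP {x y : V} (hx : x ∈ K.QP) (hy : y ∈ K.QP) : x + y ∈ K.QP := by
  rw [QP_eq_closure] at *; exact add_mem hx hy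

lemma zsmul_mem_QP {x : V} (hx : x ∈ K.QP) {t : ℤ} (ht : 0 ≤ t) : t • x ∈ K.QP := by
  lift t to ℕ using ht
  rw [natCast_zsmul, QP_eq_closure] at *
  exact nsmul_mem hx t

lemma eq_zero_of_mem_QP_of_neg_mem_QP {x : V} (hx : x ∈ K.QP) (hx' : -x ∈ K.QP) : x = 0 := by
  obtain ⟨c, rfl⟩ := hx
  obtain ⟨d, hd⟩ := hx'
  have hcd : ∀ i, ((c i + d i : ℕ) : ℤ) = 0 := K.indep _ <| by
    simp only [Nat.cast_add, add_smul, Finset.sum_add_distrib, natCast_zsmul, ← hd,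
      add_neg_cancel]
  have hc : c = 0 := funext fun i => by have := hcd i; rw [Pi.zero_apply]; omega
  simp [hc]

/-- The height `∑ cᵢ` of `x = ∑ cᵢ αᵢ ∈ Q⁺`; junk value `0` off `Q⁺`. -/
def height (x : V) : ℕ := if h : x ∈ K.QP then ∑ i, h.choose i else 0

lemma height_sum (c : Fin n → ℕ) : K.height (∑ i, c i • K.alpha i) = ∑ i, c i := by
  have hx : ∑ i, c i • K.alpha i ∈ K.QP := ⟨c, rfl⟩
  have hcoeff := K.eq_of_sum_zsmul_alpha_eq (c := fun i => (hx.choose i : ℤ)) (d := fun i => (c i : ℤ))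
    (by simpa only [natCast_zsmul] using hx.choose_spec.symm)
  rw [height, dif_pos hx]
  exact congrArg _ (funext fun i => by exact_mod_cast congrFun hcoeff i)

lemma height_add_zsmul_alpha {x : V} (hx : x ∈ K.QP) (i : Fin n) (t : ℤ)
    (hxt : x + t • K.alpha i ∈ K.QP) :
    (K.height (x + t • K.alpha i) : ℤ) = K.height x + t := by
  obtain ⟨c, rfl⟩ := hx
  obtain ⟨d, hd⟩ := hxt
  have hcoeff : (fun k => (d k : ℤ)) = fun k => c k + if k = i then t else 0 :=
    K.eq_of_sum_zsmul_alpha_eq <| by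
      simp only [natCast_zsmul, ← hd, add_smul, Finset.sum_add_distrib, ite_smul, zero_smul,
        Finset.sum_ite_eq', Finset.mem_univ, if_true]
  have hsum := congrArg (fun f : Fin n → ℤ => ∑ k, f k) hcoeff
  simp only [Finset.sum_add_distrib, Finset.sum_ite_eq', Finset.mem_univ, if_true] at hsum
  rw [hd, height_sum, height_sum]
  push_cast
  exact hsum

lemma pair_nonneg_of_height_le {ρ ν : V} (i : Fin n) (hν : ρ - ν ∈ K.QP)
    (hsν : ρ - K.s i ν ∈ K.QP) (hle : K.height (ρ - ν) ≤ K.height (ρ - K.s i ν)) :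
    0 ≤ K.pair i ν := by
  have hs : ρ - K.s i ν = (ρ - ν) + K.pair i ν • K.alpha i := by rw [s_apply]; abel
  rw [hs] at hsν hle
  have := K.height_add_zsmul_alpha hν i _ hsν
  omega

/-- Every element of `⟨s_i, s_j⟩` acts in this form, so it is determined by `c ∈ ℤ⁴`. -/
def ActsByRank2 (i j : Fin n) (c : ℤ × ℤ × ℤ × ℤ) (g : AddAut V) : Prop :=
  ∀ v : V, g v = v + (c.1 * K.pair i v + c.2.1 * K.pair j v) • K.alpha i
    + (c.2.2.1 * K.pair i v + c.2.2.2 * K.pair j v) • K.alpha j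

lemma actsByRank2_pow (i j : Fin n) (m : ℕ) :
    K.ActsByRank2 i j ((rank2Step (K.pair i (K.alpha j)) (K.pair j (K.alpha i)))^[m] 0)
      ((K.s i * K.s j) ^ m) := by
  induction m with
  | zero => intro v; simp
  | succ m ih =>
    intro v
    rw [pow_succ', Function.iterate_succ_apply', addAutGroupOld.mul_apply,
      addAutGroupOld.mul_apply, ih v]
    simp only [s_apply, rank2Step, map_add, map_sub, map_zsmul, K.pair_self]
    module

lemma s_mul_s_pow_coxeterNumber (i j : Fin n) (hij : i ≠ j) :
    (K.s i * K.s j) ^ coxeterNumber (K.pair i (K.alpha j)) (K.pair j (K.alpha i)) = 1 := by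
  ext v
  have h := K.actsByRank2_pow i j (coxeterNumber (K.pair i (K.alpha j)) (K.pair j (K.alpha i))) v
  rw [rank2Step_iterate_coxeterNumber (K.pair_offdiag i j hij) (K.pair_offdiag j i hij.symm)
    (K.pair_alpha_eq_zero_iff i j)] at h
  simpa using h

def coxeterMatrix : CoxeterMatrix (Fin n) where
  M := Matrix.of fun i j =>
    if i = j then 1 else coxeterNumber (K.pair i (K.alpha j)) (K.pair j (K.alpha i))
  isSymm := by
    ext i j
    by_cases h : i = j
    · simp [h]
    · simp [h, Ne.symm h, coxeterNumber_comm]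
  diagonal i := by simp
  off_diagonal i j h := by simp [h, coxeterNumber_ne_one]

lemma coxeterMatrix_of_ne {i j : Fin n} (hij : i ≠ j) :
    K.coxeterMatrix i j = coxeterNumber (K.pair i (K.alpha j)) (K.pair j (K.alpha i)) := by
  simp [coxeterMatrix, hij]

lemma isLiftable_s : K.coxeterMatrix.IsLiftable K.s := by
  intro i j
  by_cases hij : i = j
  · subst hij
    rw [K.coxeterMatrix.diagonal, pow_one]
    ext v
    exact K.sAux_invol i v
  · rw [K.coxeterMatrix_of_ne hij]
    exact K.s_mul_s_pow_coxeterNumber i j hij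

def coxeterSystem : CoxeterSystem K.coxeterMatrix K.coxeterMatrix.Group :=
  K.coxeterMatrix.toCoxeterSystem

def weylHom : K.coxeterMatrix.Group →* AddAut V := K.coxeterSystem.lift ⟨K.s, K.isLiftable_s⟩

@[simp] lemma weylHom_simple (i : Fin n) : K.weylHom (K.coxeterSystem.simple i) = K.s i :=
  K.coxeterSystem.lift_apply_simple K.isLiftable_s i

lemma range_weylHom : K.weylHom.range = K.Wgrp := by
  rw [MonoidHom.range_eq_map, ← K.coxeterSystem.subgroup_closure_range_simple,
    MonoidHom.map_closure, ← Set.range_comp]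
  congr 2

lemma weylHom_mem_Wgrp (w : K.coxeterMatrix.Group) : K.weylHom w ∈ K.Wgrp :=
  K.range_weylHom ▸ ⟨w, rfl⟩

lemma weylHom_mul_simple_apply (w : K.coxeterMatrix.Group) (i : Fin n) (x : V) :
    K.weylHom (w * K.coxeterSystem.simple i) x
      = K.weylHom w x - K.pair i x • K.weylHom w (K.alpha i) := by
  rw [map_mul, addAutGroupOld.mul_apply, weylHom_simple, s_apply, map_sub, map_zsmul]

lemma weylHom_alternatingWord_alpha (i j : Fin n) (q : ℕ) :
    K.weylHom (K.coxeterSystem.wordProd (CoxeterSystem.alternatingWord i j q)) (K.alpha i)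
      = (altCoeff (K.pair i (K.alpha j)) (K.pair j (K.alpha i)) q).1 • K.alpha i
        + (altCoeff (K.pair i (K.alpha j)) (K.pair j (K.alpha i)) q).2 • K.alpha j := by
  induction q with
  | zero => simp [CoxeterSystem.alternatingWord, altCoeff]
  | succ q ih =>
    rw [CoxeterSystem.alternatingWord_succ', CoxeterSystem.wordProd_cons, map_mul,
      addAutGroupOld.mul_apply, ih, altCoeff]
    split_ifs <;>
    · simp only [weylHom_simple, s_apply, map_add, map_zsmul, K.pair_self]
      module

theorem weylHom_alpha_mem_QP {w : K.coxeterMatrix.Group} {i : Fin n}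
    (hw : ¬K.coxeterSystem.IsRightDescent w i) : K.weylHom w (K.alpha i) ∈ K.QP := by
  induction hl : K.coxeterSystem.length w using Nat.strong_induction_on generalizing w i with
  | _ l ih =>
  obtain rfl | hne := eq_or_ne w 1
  · simpa using K.alpha_mem_QP i
  -- with `s_j` a descent of `w`, write `w = v ⬝ (⋯ s_i s_j)` where `v` has neither descent; the
  -- alternating factor is shorter than `m_ij`, so it maps `α_i` into `ℕ α_i + ℕ α_j`
  obtain ⟨j, hj⟩ := K.coxeterSystem.exists_rightDescent_of_ne_one hne
  have hij : i ≠ j := by rintro rfl; exact hw hj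
  obtain ⟨v, q, rfl, hlen, hvi, hvj⟩ := K.coxeterSystem.exists_eq_mul_alternatingWord i j w hw
  have hq : q ≠ 0 := by rintro rfl; simp [CoxeterSystem.alternatingWord] at hj; exact hvj hj
  have hcoeff := altCoeff_nonneg (K.pair_offdiag i j hij) (K.pair_offdiag j i hij.symm)
    (K.pair_alpha_eq_zero_iff i j)
    (K.coxeterMatrix_of_ne hij ▸ K.coxeterSystem.lt_of_eq_mul_alternatingWord hw rfl hlen)
  rw [map_mul, addAutGroupOld.mul_apply, weylHom_alternatingWord_alpha, map_add, map_zsmul,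
    map_zsmul]
  exact K.add_mem_QP (K.zsmul_mem_QP (ih _ (by omega) hvi rfl) hcoeff.1)
    (K.zsmul_mem_QP (ih _ (by omega) hvj rfl) hcoeff.2)

theorem sub_weylHom_apply_mem_QP {ν : V} (hν : ν ∈ K.Pplus) (w : K.coxeterMatrix.Group) :
    ν - K.weylHom w ν ∈ K.QP := by
  induction hl : K.coxeterSystem.length w using Nat.strong_induction_on generalizing w with
  | _ l ih =>
  obtain rfl | hne := eq_or_ne w 1
  · simpa using K.zero_mem_QP
  obtain ⟨v, j, rfl, hvj⟩ := K.coxeterSystem.exists_eq_mul_simple_of_ne_one hne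
  have hlen := K.coxeterSystem.not_isRightDescent_iff.mp hvj
  have hsplit : ν - K.weylHom (v * K.coxeterSystem.simple j) ν
      = (ν - K.weylHom v ν) + K.pair j ν • K.weylHom v (K.alpha j) := by
    rw [weylHom_mul_simple_apply]
    abel
  rw [hsplit]
  exact K.add_mem_QP (ih _ (by omega) v rfl) (K.zsmul_mem_QP (K.weylHom_alpha_mem_QP hvj) (hν j))

theorem mem_closure_simple_of_weylHom_apply_eq {ν : V} (hν : ν ∈ K.Pplus)
    {w : K.coxeterMatrix.Group} (hw : K.weylHom w ν = ν) :
    w ∈ Subgroup.closure (K.coxeterSystem.simple '' {i | K.pair i ν = 0}) := by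
  induction hl : K.coxeterSystem.length w using Nat.strong_induction_on generalizing w with
  | _ l ih =>
  obtain rfl | hne := eq_or_ne w 1
  · exact one_mem _
  obtain ⟨v, j, rfl, hvj⟩ := K.coxeterSystem.exists_eq_mul_simple_of_ne_one hne
  have hlen := K.coxeterSystem.not_isRightDescent_iff.mp hvj
  set β := K.weylHom v (K.alpha j)
  have hβ : β ∈ K.QP := K.weylHom_alpha_mem_QP hvj
  have hvν : K.weylHom v ν = ν + K.pair j ν • β := by
    rw [weylHom_mul_simple_apply, sub_eq_iff_eq_add] at hw
    exact hw
  have hj : K.pair j ν = 0 := by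
    by_contra hne
    have hcβ : -(K.pair j ν • β) ∈ K.QP := by
      simpa [hvν] using K.sub_weylHom_apply_mem_QP hν v
    -- if `⟨ν, α_j^∨⟩ > 0` then `-β = -(⟨ν, α_j^∨⟩ • β) + (⟨ν, α_j^∨⟩ - 1) • β` is positive
    have hβ' : -β ∈ K.QP := by
      have := K.add_mem_QP hcβ (K.zsmul_mem_QP hβ (by have := hν j; omega : 0 ≤ K.pair j ν - 1))
      rwa [show -(K.pair j ν • β) + (K.pair j ν - 1) • β = -β by module] at this
    exact K.alpha_ne_zero j ((K.weylHom v).map_eq_zero_iff.mp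
      (K.eq_zero_of_mem_QP_of_neg_mem_QP hβ hβ'))
  rw [hj, zero_smul, add_zero] at hvν
  exact mul_mem (ih _ (by omega) hvν rfl) (Subgroup.subset_closure ⟨j, hj, rfl⟩)

theorem Wgrp_inf_stabilizer {ν : V} (hν : ν ∈ K.Pplus) :
    K.Wgrp ⊓ addAutGroupOld.stabilizer ν = Subgroup.closure (K.s '' {i | K.pair i ν = 0}) := by
  apply le_antisymm
  · rintro _ ⟨hW, hfix⟩
    obtain ⟨w, rfl⟩ : _ ∈ K.weylHom.range := K.range_weylHom ▸ hW
    have := Subgroup.mem_map_of_mem K.weylHom (K.mem_closure_simple_of_weylHom_apply_eq hν hfix)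
    rwa [MonoidHom.map_closure, Set.image_image, funext K.weylHom_simple] at this
  · rw [Subgroup.closure_le]
    rintro _ ⟨i, hi : K.pair i ν = 0, rfl⟩
    exact ⟨Subgroup.subset_closure ⟨i, rfl⟩, by simp [hi]⟩

theorem exists_mem_Pplus_of_mem_Qprime {ρ lam : V} (hlam : lam ∈ K.Qprime ρ) :
    ∃ g ∈ K.Wgrp, g (lam + ρ) ∈ K.Pplus := by
  have hQP : ∀ w, ρ - K.weylHom w (lam + ρ) ∈ K.QP := fun w => by
    simpa only [neg_sub] using hlam _ (K.weylHom_mem_Wgrp w)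
  -- the translate `w (λ + ρ)` closest to `ρ` in height is dominant
  set f := fun w => K.height (ρ - K.weylHom w (lam + ρ))
  set w := Function.argmin f
  refine ⟨_, K.weylHom_mem_Wgrp w, fun i => K.pair_nonneg_of_height_le i (hQP w) ?_ ?_⟩
  · simpa only [map_mul, addAutGroupOld.mul_apply, weylHom_simple]
      using hQP (K.coxeterSystem.simple i * w)
  · simpa only [f, map_mul, addAutGroupOld.mul_apply, weylHom_simple]
      using Function.argmin_le f (K.coxeterSystem.simple i * w)

end KacMoody

theorem circle_stabilizer_generated_by_reflections_general
    (n : ℕ) (V : Type) [AddCommGroup V] (K : KacMoody n V)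
    (ρ : V) :
    ∀ lam ∈ K.Qprime ρ,
      ∃ S : Set (AddAut V),
        (∀ t ∈ S, ∃ u ∈ K.Wgrp, ∃ i, t = u * K.s i * u⁻¹) ∧
        (Subgroup.closure S : Set (AddAut V)) =
          {w : AddAut V | w ∈ K.Wgrp ∧ w (lam + ρ) - ρ = lam} := by
  intro lam hlam
  obtain ⟨g, hg, hν⟩ := K.exists_mem_Pplus_of_mem_Qprime hlam
  refine ⟨(MulAut.conj g).symm '' (K.s '' {i | K.pair i (g (lam + ρ)) = 0}), ?_, ?_⟩
  · rintro _ ⟨_, ⟨i, -, rfl⟩, rfl⟩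
    exact ⟨g⁻¹, inv_mem hg, i, by rw [MulAut.conj_symm_apply, inv_inv]⟩
  ext w
  rw [← MulEquiv.coe_toMonoidHom, ← MonoidHom.map_closure, ← K.Wgrp_inf_stabilizer hν,
    SetLike.mem_coe, Subgroup.mem_map_equiv, MulEquiv.symm_symm, MulAut.conj_apply,
    Subgroup.mem_inf, Subgroup.mul_mem_cancel_right _ (inv_mem hg),
    Subgroup.mul_mem_cancel_left _ hg]
  simp only [addAutGroupOld.mem_stabilizer_iff, addAutGroupOld.mul_apply,
    addAutGroupOld.inv_apply_self, EmbeddingLike.apply_eq_iff_eq, Set.mem_ofPred_eq,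
    sub_eq_iff_eq_add]

/-- **Lemma (circle stabilizers are generated by reflections).**
For every `λ ∈ Q' = ⋂_{w ∈ W} w∘Q⁻`, the stabilizer
`W_λ^∘ = {w ∈ W : w∘λ = λ}` of `λ` under the circle action is generated by
reflections in `W` (i.e. by `W`-conjugates of the simple reflections). -/
theorem circle_stabilizer_generated_by_reflections
    (n : ℕ) (V : Type) [AddCommGroup V] (K : KacMoody n V)
    (ρ : V) (hρ : ∀ i, K.pair i ρ = 1) :
    ∀ lam ∈ K.Qprime ρ,
      ∃ S : Set (AddAut V),
        (∀ t ∈ S, ∃ u ∈ K.Wgrp, ∃ i, t = u * K.s i * u⁻¹) ∧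
        (Subgroup.closure S : Set (AddAut V)) =
          {w : AddAut V | w ∈ K.Wgrp ∧ w (lam + ρ) - ρ = lam} :=
  circle_stabilizer_generated_by_reflections_general n V K ρ
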